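/- Let d ≥ 2 and let (Ω_t(x)) be the specific family of sets defined as follows: for |x| ≤ 1, Ω₁(x) := {h ∈ ℝ^d : |x+h| ≤ 2}; for |x| > 1, Ω₁(x) := {h ∈ ℝ^d : ∃ τ > 0 ∃ y ∈ ℝ^d with x+h = τy, |y| = |x|, ⟨x,y⟩ > |x|² − 1/2 and |x| − 1/2 < τ|x| < |x| + 1/2}; and Ω_t(x) := t·Ω₁(x) for t > 0. Then for all x ∈ ℝ^d and t > 0: {h ∈ ℝ^d : |h| < t/4} ⊂ Ω_t(x) ⊂ {h ∈ ℝ^d : |h| ≤ 3t}. In particular the family satisfies the sandwich condition {h : |h| < At} ⊂ Ω_t(x) ⊂ {h : |h| < Bt} with A = 1/4 and any B > 3. -/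
import Mathlib


open MeasureTheory Set
open scoped ENNReal NNReal RealInnerProductSpace Pointwise

noncomputable section

abbrev E (d : ℕ) := EuclideanSpace ℝ (Fin d)

/-- the set `Ω₁(x)` of (2.7)/(2.8) -/
def Omega1 (d : ℕ) (x : E d) : Set (E d) :=
  if ‖x‖ ≤ 1 then {h | ‖x + h‖ ≤ 2}
  else {h | ∃ τ : ℝ, 0 < τ ∧ ∃ y : E d, x + h = τ • y ∧ ‖y‖ = ‖x‖ ∧
    ⟪x, y⟫ > ‖x‖ ^ 2 - 1 / 2 ∧ ‖x‖ - 1 / 2 < τ * ‖x‖ ∧ τ * ‖x‖ < ‖x‖ + 1 / 2}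

/-- the scaled family `Ω_t(x) = t·Ω₁(x)` of (2.9) -/
def OmegaT (d : ℕ) (t : ℝ) (x : E d) : Set (E d) := t • Omega1 d x

lemma omega1_small (d : ℕ) (x : E d) {h : E d} (hh : ‖h‖ < 1 / 4) :
    h ∈ Omega1 d x := by
  rw [Omega1]
  split_ifs with hx
  · show ‖x + h‖ ≤ 2
    calc ‖x + h‖ ≤ ‖x‖ + ‖h‖ := norm_add_le _ _
      _ ≤ 2 := by linarith
  · push_neg at hx
    have hxh : 0 < ‖x + h‖ := by
      have h1 : ‖x‖ - ‖x + h‖ ≤ ‖x - (x + h)‖ := norm_sub_norm_le _ _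
      have h2 : ‖x - (x + h)‖ = ‖h‖ := by
        rw [show x - (x + h) = -h by abel, norm_neg]
      linarith [h1, h2.le]
    set c : ℝ := ‖x‖ / ‖x + h‖ with hc
    have hcpos : 0 < c := by positivity
    refine ⟨‖x + h‖ / ‖x‖, by positivity, c • (x + h), ?_, ?_, ?_, ?_, ?_⟩
    · rw [smul_smul]
      have : ‖x + h‖ / ‖x‖ * c = 1 := by
        rw [hc]; field_simp
      rw [this, one_smul]
    · rw [norm_smul, Real.norm_eq_abs, abs_of_pos hcpos, hc]
      field_simp
    · -- inner product bound
      set y := c • (x + h) with hy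
      have hny : ‖y‖ = ‖x‖ := by
        rw [hy, norm_smul, Real.norm_eq_abs, abs_of_pos hcpos, hc]; field_simp
      have hxy : ‖x - y‖ < 1 / 2 := by
        have hc2 : c * ‖x + h‖ = ‖x‖ := by rw [hc]; field_simp
        have e1 : ‖(x + h) - y‖ = |‖x + h‖ - ‖x‖| := by
          have h4 : (x + h) - y = (1 - c) • (x + h) := by
            rw [hy, sub_smul, one_smul]
          rw [h4, norm_smul, Real.norm_eq_abs,
            show ‖x + h‖ - ‖x‖ = (1 - c) * ‖x + h‖ from by rw [sub_mul, one_mul, hc2],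
            abs_mul, abs_of_pos hxh]
        have e2 : |‖x + h‖ - ‖x‖| ≤ ‖h‖ := by
          have := abs_norm_sub_norm_le (x + h) x
          simpa using this
        calc ‖x - y‖ ≤ ‖x - (x + h)‖ + ‖(x + h) - y‖ := by
              have : x - y = (x - (x + h)) + ((x + h) - y) := by abel
              rw [this]; exact norm_add_le _ _
          _ = ‖h‖ + ‖(x + h) - y‖ := by
              rw [show x - (x + h) = -h by abel, norm_neg]
          _ < 1 / 2 := by rw [e1]; linarith
      have hsq : ‖x - y‖ ^ 2 = ‖x‖ ^ 2 - 2 * ⟪x, y⟫ + ‖y‖ ^ 2 := by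
        rw [@norm_sub_sq_real]
      have hsq2 : ‖x - y‖ ^ 2 < 1 / 4 := by
        nlinarith [norm_nonneg (x - y)]
      show ⟪x, y⟫ > ‖x‖ ^ 2 - 1 / 2
      nlinarith [hny]
    · have : ‖x + h‖ / ‖x‖ * ‖x‖ = ‖x + h‖ := by field_simp
      rw [this]
      have h1 : ‖x‖ - ‖x + h‖ ≤ ‖h‖ := by
        have h2 := norm_sub_norm_le x (x + h)
        have h3 : ‖x - (x + h)‖ = ‖h‖ := by
          rw [show x - (x + h) = -h by abel, norm_neg]
        linarith
      linarith
    · have : ‖x + h‖ / ‖x‖ * ‖x‖ = ‖x + h‖ := by field_simp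
      rw [this]
      have := norm_add_le x h
      linarith

lemma omega1_big (d : ℕ) (x : E d) {h : E d} (hh : h ∈ Omega1 d x) : ‖h‖ ≤ 3 := by
  rw [Omega1] at hh
  split_ifs at hh with hx
  · have : ‖h‖ ≤ ‖x + h‖ + ‖x‖ := by
      calc ‖h‖ = ‖(x + h) - x‖ := by rw [show (x + h) - x = h by abel]
        _ ≤ ‖x + h‖ + ‖x‖ := norm_sub_le _ _
    simp only [mem_setOf_eq] at hh
    linarith
  · push_neg at hx
    obtain ⟨τ, hτ, y, hxy, hny, hinner, hlo, hhi⟩ := hh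
    have hxpos : (0:ℝ) < ‖x‖ := by linarith
    have hdh : h = (τ • y - y) + (y - x) := by
      have : h = τ • y - x := by rw [← hxy]; abel
      rw [this]; abel
    have e1 : ‖τ • y - y‖ = |τ - 1| * ‖x‖ := by
      rw [show τ • y - y = (τ - 1) • y by rw [sub_smul, one_smul],
        norm_smul, Real.norm_eq_abs, hny]
    have e2 : |τ - 1| * ‖x‖ < 1 / 2 := by
      rw [show |τ - 1| * ‖x‖ = |(τ - 1) * ‖x‖| from by rw [abs_mul, abs_of_pos hxpos],
        abs_lt]
      constructor <;> [nlinarith; nlinarith]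
    have e2' : ‖τ • y - y‖ < 1 / 2 := by rw [e1]; exact e2
    have hsq : ‖y - x‖ ^ 2 = ‖y‖ ^ 2 - 2 * ⟪y, x⟫ + ‖x‖ ^ 2 := by
      rw [@norm_sub_sq_real]
    have hinner' : ⟪y, x⟫ = ⟪x, y⟫ := real_inner_comm _ _
    have hsq2 : ‖y - x‖ ^ 2 < 1 := by
      rw [hsq, hinner', hny]; nlinarith
    have e3 : ‖y - x‖ ≤ 1 := by nlinarith [norm_nonneg (y - x)]
    calc ‖h‖ ≤ ‖τ • y - y‖ + ‖y - x‖ := by rw [hdh]; exact norm_add_le _ _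
      _ ≤ 3 := by linarith

lemma omegaT_mem_iff (d : ℕ) (t : ℝ) (ht : 0 < t) (x : E d) (h : E d) :
    h ∈ OmegaT d t x ↔ t⁻¹ • h ∈ Omega1 d x := by
  rw [OmegaT, mem_smul_set_iff_inv_smul_mem₀ ht.ne']

/-- **Step 1 of the proof of Theorem 2.2**: the family `Ω_t(x)` satisfies
`{|h| < t/4} ⊆ Ω_t(x) ⊆ {|h| ≤ 3t}`, hence the sandwich condition (2.5) with
`A = 1/4` and any `B > 3`. -/
theorem omega_family_sandwich (d : ℕ) (hd : 2 ≤ d) (x : E d) (t : ℝ) (ht : 0 < t) :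
    {h : E d | ‖h‖ < 1 / 4 * t} ⊆ OmegaT d t x ∧
    OmegaT d t x ⊆ {h : E d | ‖h‖ ≤ 3 * t} ∧
    ∀ B : ℝ, 3 < B → OmegaT d t x ⊆ {h : E d | ‖h‖ < B * t} := by
  have hnorm : ∀ h : E d, ‖t⁻¹ • h‖ = ‖h‖ / t := by
    intro h
    rw [norm_smul, Real.norm_eq_abs, abs_of_pos (inv_pos.mpr ht)]
    field_simp
  have hsub1 : {h : E d | ‖h‖ < 1 / 4 * t} ⊆ OmegaT d t x := by
    intro h hh
    rw [omegaT_mem_iff d t ht]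
    apply omega1_small
    rw [hnorm]
    rw [div_lt_iff₀ ht]
    simp only [mem_setOf_eq] at hh
    linarith
  have hsub2 : OmegaT d t x ⊆ {h : E d | ‖h‖ ≤ 3 * t} := by
    intro h hh
    rw [omegaT_mem_iff d t ht] at hh
    have := omega1_big d x hh
    rw [hnorm, div_le_iff₀ ht] at this
    simpa using this
  refine ⟨hsub1, hsub2, ?_⟩
  intro B hB h hh
  have := hsub2 hh
  simp only [mem_setOf_eq] at this ⊢
  nlinarith
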